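/- arXiv:1409.4380 — 2 statements merged into one kernel-verified Lean document; each statement's English description precedes it below -/
import Mathlib

section
/- Every congruence on G(E) is a Rees congruence if and only if for every edge e ∈ E¹ there exists a path p of positive length with s(p) = s(e) and r(p) = r(e) such that p ≠ et for all paths t. -/
universe u

/-- A directed graph: vertices, edges, source and range maps. -/
structure DGraph : Type (u + 1) where
  V : Type u
  Ed : Type u
  src : Ed → V
  rng : Ed → V

/-- The end vertex of a list of edges started at `v` (ignoring composability). -/
def DGraph.ranAux (G : DGraph) : G.V → List G.Ed → G.V
  | v, [] => v
  | _, e :: es => DGraph.ranAux G (G.rng e) es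

/-- The edges `l` form a composable path starting at `v`. -/
def DGraph.Chain (G : DGraph) : G.V → List G.Ed → Prop
  | _, [] => True
  | v, e :: es => G.src e = v ∧ DGraph.Chain G (G.rng e) es

theorem DGraph.ranAux_append (G : DGraph) (v : G.V) (l1 l2 : List G.Ed) :
    G.ranAux v (l1 ++ l2) = G.ranAux (G.ranAux v l1) l2 := by
  induction l1 generalizing v with
  | nil => rfl
  | cons e es ih => exact ih (G.rng e)

theorem DGraph.chain_append (G : DGraph) {v : G.V} {l1 l2 : List G.Ed}
    (h1 : G.Chain v l1) (h2 : G.Chain (G.ranAux v l1) l2) : G.Chain v (l1 ++ l2) := by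
  induction l1 generalizing v with
  | nil => exact h2
  | cons e es ih => exact ⟨h1.1, ih h1.2 h2⟩

theorem DGraph.chain_append_right (G : DGraph) {v : G.V} {l1 l2 : List G.Ed}
    (h : G.Chain v (l1 ++ l2)) : G.Chain (G.ranAux v l1) l2 := by
  induction l1 generalizing v with
  | nil => exact h
  | cons e es ih => exact ih h.2

/-- A (finite, directed) path in the graph `G`: a start vertex together
with a composable list of edges. Vertices are the paths of length `0`. -/
structure GPath (G : DGraph.{u}) : Type u where
  start : G.V
  edges : List G.Ed
  chain : G.Chain start edges

namespace GPath

variable {G : DGraph}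

/-- The range (end vertex) of a path. -/
def ran (p : GPath G) : G.V := G.ranAux p.start p.edges

/-- The path of length zero at a vertex. -/
def ofVertex (G : DGraph) (v : G.V) : GPath G := ⟨v, [], trivial⟩

/-- The path of length one given by an edge. -/
def ofEdge (G : DGraph) (e : G.Ed) : GPath G := ⟨G.src e, [e], ⟨rfl, trivial⟩⟩

@[simp] theorem ofVertex_ran (G : DGraph) (v : G.V) : (ofVertex G v).ran = v := rfl

@[simp] theorem ofEdge_ran (G : DGraph) (e : G.Ed) : (ofEdge G e).ran = G.rng e := rfl

/-- Concatenation of composable paths. -/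
def append (p q : GPath G) (h : p.ran = q.start) : GPath G :=
  ⟨p.start, p.edges ++ q.edges,
    G.chain_append p.chain (by
      show G.Chain (G.ranAux p.start p.edges) q.edges
      have : G.ranAux p.start p.edges = q.start := h
      rw [this]; exact q.chain)⟩

@[simp] theorem append_ran (p q : GPath G) (h : p.ran = q.start) :
    (p.append q h).ran = q.ran := by
  show G.ranAux p.start (p.edges ++ q.edges) = q.ran
  rw [G.ranAux_append]
  have : G.ranAux p.start p.edges = q.start := h
  rw [this]; rfl

/-- `y` is an initial segment of the path `p`. -/
def IsPrefixOf (y p : GPath G) : Prop := y.start = p.start ∧ y.edges <+: p.edges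

/-- The remainder `t` of `p` after its initial segment `y`, so that `p = y ++ t`. -/
def remainder (y p : GPath G) (h : y.IsPrefixOf p) : GPath G :=
  ⟨y.ran, p.edges.drop y.edges.length, by
    obtain ⟨l2, hl⟩ := h.2
    rw [← hl, List.drop_left]
    show G.Chain (G.ranAux y.start y.edges) l2
    rw [h.1]
    exact G.chain_append_right (v := p.start) (l1 := y.edges) (l2 := l2)
      (by rw [hl]; exact p.chain)⟩

@[simp] theorem remainder_ran (y p : GPath G) (h : y.IsPrefixOf p) :
    (y.remainder p h).ran = p.ran := by
  obtain ⟨l2, hl⟩ := h.2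
  show G.ranAux y.ran (p.edges.drop y.edges.length) = p.ran
  rw [← hl, List.drop_left]
  show G.ranAux (G.ranAux y.start y.edges) l2 = p.ran
  rw [h.1, ← G.ranAux_append, hl]
  rfl

end GPath

/-- The graph inverse semigroup of `G` (in normal form): its elements are zero together
with the elements `x * y⁻¹` for paths `x`, `y` with the same range. -/
inductive GIS (G : DGraph.{u}) : Type u where
  | zero : GIS G
  | mk (x y : GPath G) (h : x.ran = y.ran) : GIS G

instance (G : DGraph) : Zero (GIS G) := ⟨GIS.zero⟩

open scoped Classical in
/-- Multiplication in the graph inverse semigroup. -/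
noncomputable def GIS.gmul {G : DGraph} : GIS G → GIS G → GIS G
  | GIS.zero, _ => GIS.zero
  | GIS.mk _ _ _, GIS.zero => GIS.zero
  | GIS.mk x y hxy, GIS.mk p q hpq =>
    if h1 : y.IsPrefixOf p then
      GIS.mk (x.append (y.remainder p h1) hxy) q
        ((GPath.append_ran _ _ _).trans ((GPath.remainder_ran _ _ _).trans hpq))
    else if h2 : p.IsPrefixOf y then
      GIS.mk x (q.append (p.remainder y h2) hpq.symm)
        (hxy.trans ((GPath.append_ran _ _ _).trans (GPath.remainder_ran _ _ _)).symm)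
    else GIS.zero

noncomputable instance (G : DGraph) : Mul (GIS G) := ⟨GIS.gmul⟩

/-- The element of `GIS G` corresponding to a vertex `v` (i.e. `v = v * v⁻¹`). -/
def vertexEl (G : DGraph) (v : G.V) : GIS G :=
  GIS.mk (GPath.ofVertex G v) (GPath.ofVertex G v) rfl

/-- The element of `GIS G` corresponding to an edge `e` (i.e. `e = e * r(e)⁻¹`). -/
def edgeEl (G : DGraph) (e : G.Ed) : GIS G :=
  GIS.mk (GPath.ofEdge G e) (GPath.ofVertex G (G.rng e)) rfl

/-- The inverse operation on `GIS G`: `(x y⁻¹)⁻¹ = y x⁻¹`. -/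
def GIS.inv {G : DGraph} : GIS G → GIS G
  | GIS.zero => GIS.zero
  | GIS.mk x y h => GIS.mk y x h.symm

/-- `a` lies in the principal left ideal generated by `b` (`S¹a ⊆ S¹b`). -/
def GreenLeL {G : DGraph} (a b : GIS G) : Prop := a = b ∨ ∃ c, a = c * b

/-- `a` lies in the principal right ideal generated by `b` (`aS¹ ⊆ bS¹`). -/
def GreenLeR {G : DGraph} (a b : GIS G) : Prop := a = b ∨ ∃ c, a = b * c

/-- `a` lies in the principal two-sided ideal generated by `b` (`S¹aS¹ ⊆ S¹bS¹`). -/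
def GreenLeJ {G : DGraph} (a b : GIS G) : Prop :=
  a = b ∨ (∃ c, a = c * b) ∨ (∃ c, a = b * c) ∨ (∃ c d, a = c * b * d)

/-- Green's `L`-relation. -/
def GreenEqL {G : DGraph} (a b : GIS G) : Prop := GreenLeL a b ∧ GreenLeL b a

/-- Green's `R`-relation. -/
def GreenEqR {G : DGraph} (a b : GIS G) : Prop := GreenLeR a b ∧ GreenLeR b a

/-- Green's `J`-relation. -/
def GreenEqJ {G : DGraph} (a b : GIS G) : Prop := GreenLeJ a b ∧ GreenLeJ b a

/-- There is a (possibly trivial) directed path from `v` to `w` in `G`. -/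
def GConnected (G : DGraph) (v w : G.V) : Prop := ∃ t : GPath G, t.start = v ∧ t.ran = w

/-- `I` is a (two-sided) ideal of `GIS G`. -/
def GISIdeal {G : DGraph} (I : Set (GIS G)) : Prop :=
  ∀ a ∈ I, ∀ c : GIS G, a * c ∈ I ∧ c * a ∈ I

/-- `R` is the Rees congruence of some ideal `I`, i.e. `R = (I × I) ∪ Δ`. -/
def IsReesCon {G : DGraph} (R : Con (GIS G)) : Prop :=
  ∃ I : Set (GIS G), GISIdeal I ∧ ∀ a b : GIS G, R a b ↔ (a ∈ I ∧ b ∈ I) ∨ a = b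

/-- The only congruences on `GIS G` are the universal one and the diagonal. -/
def CongFree (G : DGraph) : Prop :=
  ∀ R : Con (GIS G), (∀ a b : GIS G, R a b) ∨ (∀ a b : GIS G, R a b ↔ a = b)

/-- The natural partial order on the inverse semigroup `GIS G`:
`a ≤ b` iff `a = ε * b` for some idempotent `ε`. -/
def natLe {G : DGraph} (a b : GIS G) : Prop := ∃ ε : GIS G, ε * ε = ε ∧ a = ε * b

/-- The graph obtained from `G` by deleting the vertices in `S` and all
edges incident to them. -/
def DGraph.delete (G : DGraph) (S : Set G.V) : DGraph where
  V := {v : G.V // v ∉ S}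
  Ed := {e : G.Ed // G.src e ∉ S ∧ G.rng e ∉ S}
  src e := ⟨G.src e.1, e.2.1⟩
  rng e := ⟨G.rng e.1, e.2.2⟩

/-- The graph with a single vertex and `n` loops; its graph inverse semigroup
is the polycyclic monoid `Pₙ`. -/
def polyGraph (n : ℕ) : DGraph :=
  ⟨PUnit, Fin n, fun _ => PUnit.unit, fun _ => PUnit.unit⟩

/-!
Call a path of positive length from `s(e)` to `r(e)` that does not begin with `e` a bypass of
`e`. If every edge has a bypass, every proper extension `x'` of a path `x` has a rival `x''`: an
extension of `x` that ends where `x'` ends but is incomparable with `x'` (replace the first edge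
`e` of `x'` after `x` by a bypass of `e`). Let a congruence relate `a = x y⁻¹` and `b = x' y'⁻¹`
with `x ≠ x'`. If `x` and `x'` are incomparable, `x x⁻¹` fixes `a` and kills `b`. If `x'` properly
extends `x`, left multiplication by `x'' x''⁻¹` kills `b` and sends `a` to an element whose middle
vertex is `r(x'') = r(x')`; an element is related to `0` as soon as one with the same middle
vertex is, so `b`, and with it `a`, is related to `0`. Right paths are treated alike. Hence a
congruence relating two distinct elements relates both to `0`, which is the Rees property.

Conversely, if `e` has no bypass, every infinite word `p e e e …` with `s(p) = s(e)` and
`r(p) = r(e)` begins with `e`. The semigroup acts by partial maps on infinite words (`x y⁻¹`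
sends `y t` to `x t`), and the words `p e e e …` with `r(p) = r(e)` form an invariant set. Acting
alike on that set is a congruence which identifies `s(e)` with `e e⁻¹` but not with `0`, so it is
not a Rees congruence.
-/

namespace GPath

variable {G : DGraph}

@[ext] theorem ext {p q : GPath G} (hs : p.start = q.start) (he : p.edges = q.edges) : p = q := by
  cases p; cases q; simp_all

def extend (p : GPath G) (u : List G.Ed) (hu : G.Chain p.ran u) : GPath G :=
  ⟨p.start, p.edges ++ u, G.chain_append p.chain hu⟩

@[simp] theorem start_extend (p : GPath G) (u hu) : (p.extend u hu).start = p.start := rfl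

@[simp] theorem edges_extend (p : GPath G) (u hu) : (p.extend u hu).edges = p.edges ++ u := rfl

theorem ran_extend (p : GPath G) (u hu) : (p.extend u hu).ran = G.ranAux p.ran u :=
  G.ranAux_append _ _ _

@[simp] theorem extend_nil (p : GPath G) (hu) : p.extend [] hu = p := ext rfl (List.append_nil _)

theorem isPrefixOf_extend (p : GPath G) (u hu) : p.IsPrefixOf (p.extend u hu) := ⟨rfl, u, rfl⟩

theorem exists_eq_extend {y p : GPath G} (h : y.IsPrefixOf p) : ∃ u hu, p = y.extend u hu := by
  obtain ⟨hs, u, hu⟩ := h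
  refine ⟨u, ?_, ext hs.symm hu.symm⟩
  exact G.chain_append_right (v := y.start) (by rw [hu, hs]; exact p.chain)

def Incomparable (p q : GPath G) : Prop := ¬ p.IsPrefixOf q ∧ ¬ q.IsPrefixOf p

theorem Incomparable.symm {p q : GPath G} (h : p.Incomparable q) : q.Incomparable p := ⟨h.2, h.1⟩

theorem incomparable_extend_cons (p : GPath G) {e f : G.Ed} (hef : e ≠ f) (u v hu hv) :
    (p.extend (e :: u) hu).Incomparable (p.extend (f :: v) hv) := by
  constructor
  · rintro ⟨-, h⟩
    exact hef (List.cons_prefix_cons.1 ((List.prefix_append_right_inj _).1 h)).1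
  · rintro ⟨-, h⟩
    exact hef (List.cons_prefix_cons.1 ((List.prefix_append_right_inj _).1 h)).1.symm

def IsBypass (p : GPath G) (e : G.Ed) : Prop :=
  p.edges ≠ [] ∧ p.start = G.src e ∧ p.ran = G.rng e ∧
    ∀ (t : GPath G) (ht : (ofEdge G e).ran = t.start), p ≠ (ofEdge G e).append t ht

end GPath

def DGraph.HasBypasses (G : DGraph) : Prop := ∀ e : G.Ed, ∃ p : GPath G, p.IsBypass e

theorem GPath.exists_incomparable_of_isPrefixOf {G : DGraph} (hC : G.HasBypasses)
    {x x' : GPath G} (hx : x.IsPrefixOf x') (hne : x ≠ x') :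
    ∃ x'' : GPath G, x.IsPrefixOf x'' ∧ x''.ran = x'.ran ∧ x'.Incomparable x'' := by
  obtain ⟨u, hu, rfl⟩ := GPath.exists_eq_extend hx
  obtain ⟨e, l, rfl⟩ := List.exists_cons_of_ne_nil (show u ≠ [] by rintro rfl; simp at hne)
  obtain ⟨p, hp, hps, hpr, hpe⟩ := hC e
  obtain ⟨f, m, hfm⟩ := List.exists_cons_of_ne_nil hp
  have hchain : G.Chain (G.src e) (f :: m) := hps ▸ hfm ▸ p.chain
  have hfe : f ≠ e := by
    rintro rfl
    exact hpe ⟨G.rng f, m, hchain.2⟩ rfl (GPath.ext hps hfm)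
  have hxe : x.ran = G.src e := hu.1.symm
  have hran : G.ranAux x.ran (f :: m) = G.rng e := by rw [hxe, ← hps, ← hfm]; exact hpr
  refine ⟨x.extend (f :: m ++ l) (G.chain_append (hxe ▸ hchain) (hran ▸ hu.2)),
    x.isPrefixOf_extend _ _, ?_, GPath.incomparable_extend_cons x hfe.symm _ _ _ _⟩
  rw [GPath.ran_extend, GPath.ran_extend, G.ranAux_append, hran]
  rfl

namespace GIS

variable {G : DGraph}

theorem mk_congr {x x' y y' : GPath G} (hx : x = x') (hy : y = y') (h h') :
    GIS.mk x y h = GIS.mk x' y' h' := by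
  subst hx hy; rfl

@[simp] theorem zero_mul (a : GIS G) : 0 * a = 0 := rfl

@[simp] theorem mul_zero (a : GIS G) : a * 0 = 0 := by cases a <;> rfl

theorem mk_mul_mk_cancel (x y q : GPath G) (h : x.ran = y.ran) (h' : y.ran = q.ran) :
    GIS.mk x y h * GIS.mk y q h' = GIS.mk x q (h.trans h') := by
  show GIS.gmul _ _ = _
  rw [GIS.gmul, dif_pos ⟨rfl, List.prefix_refl _⟩]
  refine mk_congr ?_ rfl _ _
  refine GPath.ext rfl ?_
  show x.edges ++ y.edges.drop y.edges.length = x.edges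
  simp

theorem mk_mul_mk_extend (x y : GPath G) (h : x.ran = y.ran) (u hu) (q : GPath G) (h') :
    GIS.mk x y h * GIS.mk (y.extend u hu) q h' =
      GIS.mk (x.extend u (h ▸ hu)) q (by rw [x.ran_extend, h, ← y.ran_extend u hu, h']) := by
  show GIS.gmul _ _ = _
  rw [GIS.gmul, dif_pos (y.isPrefixOf_extend u hu)]
  refine mk_congr ?_ rfl _ _
  refine GPath.ext rfl ?_
  show x.edges ++ (y.edges ++ u).drop y.edges.length = x.edges ++ u
  simp

theorem mk_extend_mul_mk (x p : GPath G) (u hu) (h : x.ran = (p.extend u hu).ran) (q : GPath G)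
    (h' : p.ran = q.ran) :
    GIS.mk x (p.extend u hu) h * GIS.mk p q h' =
      GIS.mk x (q.extend u (h' ▸ hu)) (by rw [h, p.ran_extend, q.ran_extend, h']) := by
  rcases eq_or_ne u [] with rfl | hne
  · simp only [GPath.extend_nil] at h ⊢
    exact mk_mul_mk_cancel x p q h h'
  have hnot : ¬ (p.extend u hu).IsPrefixOf p := fun hp => hne <| by simpa using hp.2.length_le
  show GIS.gmul _ _ = _
  rw [GIS.gmul, dif_neg hnot, dif_pos (p.isPrefixOf_extend u hu)]
  refine mk_congr rfl ?_ _ _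
  refine GPath.ext rfl ?_
  show q.edges ++ (p.edges ++ u).drop p.edges.length = q.edges ++ u
  simp

theorem mk_mul_mk_of_incomparable (x y p q : GPath G) (h h') (hyp : y.Incomparable p) :
    GIS.mk x y h * GIS.mk p q h' = 0 := by
  show GIS.gmul _ _ = _
  rw [GIS.gmul, dif_neg hyp.1, dif_neg hyp.2]
  rfl

end GIS

theorem isReesCon_iff {G : DGraph} (R : Con (GIS G)) :
    IsReesCon R ↔ ∀ a b, R a b → a ≠ b → R a 0 := by
  constructor
  · rintro ⟨I, hI, hR⟩ a b hab hne
    have ha : a ∈ I := (((hR a b).1 hab).resolve_right hne).1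
    have h0 : (0 : GIS G) ∈ I := by simpa using (hI a ha 0).1
    exact (hR a 0).2 (Or.inl ⟨ha, h0⟩)
  · intro h
    refine ⟨{a | R a 0}, fun a ha c => ⟨?_, ?_⟩, fun a b => ⟨fun hab => ?_, ?_⟩⟩
    · simpa using R.mul ha (R.refl c)
    · simpa using R.mul (R.refl c) ha
    · by_cases hne : a = b
      · exact Or.inr hne
      · have ha := h a b hab hne
        exact Or.inl ⟨ha, R.trans (R.symm hab) ha⟩
    · rintro (⟨ha, hb⟩ | rfl)
      · exact R.trans ha (R.symm hb)
      · exact R.refl a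

namespace GIS

variable {G : DGraph} (R : Con (GIS G))

theorem rel_zero_mul_mul {b : GIS G} (hb : R b 0) (a c : GIS G) : R (a * b * c) 0 := by
  simpa using R.mul (R.mul (R.refl a) hb) (R.refl c)

theorem rel_zero_of_ran_eq {x y x' y' : GPath G} {h h'} (hR : R (mk x y h) 0)
    (hx : x.ran = x'.ran) : R (mk x' y' h') 0 := by
  have hxy := rel_zero_mul_mul R hR (mk x' x hx.symm) (mk y y' (h.symm.trans (hx.trans h')))
  rwa [mk_mul_mk_cancel, mk_mul_mk_cancel] at hxy

theorem rel_zero_of_isPrefixOf_left (hC : G.HasBypasses) {x y x' y' : GPath G} {h h'}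
    (hR : R (mk x y h) (mk x' y' h')) (hx : x.IsPrefixOf x') (hne : x ≠ x') :
    R (mk x' y' h') 0 := by
  obtain ⟨x'', hxx'', hran, hinc⟩ := GPath.exists_incomparable_of_isPrefixOf hC hx hne
  obtain ⟨u, hu, rfl⟩ := GPath.exists_eq_extend hxx''
  have hkill := R.mul (R.refl (mk (x.extend u hu) (x.extend u hu) rfl)) hR
  rw [mk_extend_mul_mk, mk_mul_mk_of_incomparable _ _ _ _ _ _ hinc.symm] at hkill
  exact rel_zero_of_ran_eq R hkill hran

theorem rel_zero_of_isPrefixOf_right (hC : G.HasBypasses) {x y x' y' : GPath G} {h h'}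
    (hR : R (mk x y h) (mk x' y' h')) (hy : y.IsPrefixOf y') (hne : y ≠ y') :
    R (mk x' y' h') 0 := by
  obtain ⟨y'', hyy'', hran, hinc⟩ := GPath.exists_incomparable_of_isPrefixOf hC hy hne
  obtain ⟨u, hu, rfl⟩ := GPath.exists_eq_extend hyy''
  have hkill := R.mul hR (R.refl (mk (y.extend u hu) (y.extend u hu) rfl))
  rw [mk_mul_mk_extend, mk_mul_mk_of_incomparable _ _ _ _ _ _ hinc] at hkill
  refine rel_zero_of_ran_eq R hkill ?_
  rw [GPath.ran_extend, h, ← GPath.ran_extend y u hu, hran, h']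

theorem rel_zero_of_left_ne (hC : G.HasBypasses) {x y x' y' : GPath G} {h h'}
    (hR : R (mk x y h) (mk x' y' h')) (hne : x ≠ x') : R (mk x y h) 0 := by
  by_cases hxx' : x.IsPrefixOf x'
  · exact R.trans hR (rel_zero_of_isPrefixOf_left R hC hR hxx' hne)
  by_cases hx'x : x'.IsPrefixOf x
  · exact rel_zero_of_isPrefixOf_left R hC (R.symm hR) hx'x (Ne.symm hne)
  have hkill := R.mul (R.refl (mk x x rfl)) hR
  rwa [mk_mul_mk_cancel, mk_mul_mk_of_incomparable _ _ _ _ _ _ ⟨hxx', hx'x⟩] at hkill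

theorem rel_zero_of_right_ne (hC : G.HasBypasses) {x y x' y' : GPath G} {h h'}
    (hR : R (mk x y h) (mk x' y' h')) (hne : y ≠ y') : R (mk x y h) 0 := by
  by_cases hyy' : y.IsPrefixOf y'
  · exact R.trans hR (rel_zero_of_isPrefixOf_right R hC hR hyy' hne)
  by_cases hy'y : y'.IsPrefixOf y
  · exact rel_zero_of_isPrefixOf_right R hC (R.symm hR) hy'y (Ne.symm hne)
  have hkill := R.mul hR (R.refl (mk y y rfl))
  rwa [mk_mul_mk_cancel, mk_mul_mk_of_incomparable _ _ _ _ _ _ ⟨hy'y, hyy'⟩] at hkill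

theorem rel_zero_of_rel_of_ne (hC : G.HasBypasses) {a b : GIS G} (hR : R a b) (hne : a ≠ b) :
    R a 0 := by
  cases a with
  | zero => exact R.refl 0
  | mk x y h =>
    cases b with
    | zero => exact hR
    | mk x' y' h' =>
      by_cases hx : x = x'
      · exact rel_zero_of_right_ne R hC hR fun hy => hne (mk_congr hx hy _ _)
      · exact rel_zero_of_left_ne R hC hR hx

end GIS

theorem List.prefix_or_prefix_of_appendStream_eq {α : Type*} {l₁ l₂ : List α}
    {s₁ s₂ : Stream' α} (h : l₁ ++ₛ s₁ = l₂ ++ₛ s₂) : l₁ <+: l₂ ∨ l₂ <+: l₁ := by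
  have h₁ : l₁ <+: (l₁ ++ₛ s₁).take (l₁.length + l₂.length) :=
    ⟨s₁.take l₂.length, Stream'.append_take _ _ _⟩
  have h₂ : l₂ <+: (l₁ ++ₛ s₁).take (l₁.length + l₂.length) := by
    rw [h, Nat.add_comm]
    exact ⟨s₂.take l₁.length, Stream'.append_take _ _ _⟩
  exact List.prefix_or_prefix_of_prefix h₁ h₂

theorem Stream'.eq_const_of_append_eq_const {α : Type*} {l : List α} {s : Stream' α} {a : α}
    (h : l ++ₛ s = Stream'.const a) : (∀ b ∈ l, b = a) ∧ s = Stream'.const a := by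
  refine ⟨fun b hb => ?_, by rw [← Stream'.drop_append_stream l s, h, Stream'.drop_const]⟩
  obtain ⟨n, hn⟩ := h ▸ Stream'.mem_append_stream_left s hb
  simpa using hn

theorem DGraph.ranAux_rng_of_forall_eq (G : DGraph) (e : G.Ed) {l : List G.Ed}
    (hl : ∀ f ∈ l, f = e) : G.ranAux (G.rng e) l = G.rng e := by
  induction l with
  | nil => rfl
  | cons f l ih =>
    obtain rfl := hl f List.mem_cons_self
    exact ih fun g hg => hl g (List.mem_cons_of_mem _ hg)

namespace GPath

variable {G : DGraph}

/-- Infinite words carry a start vertex, so that paths of length zero have a domain too. -/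
def appendStream (p : GPath G) (t : Stream' G.Ed) : G.V × Stream' G.Ed :=
  (p.start, p.edges ++ₛ t)

theorem appendStream_extend (p : GPath G) (u hu) (t : Stream' G.Ed) :
    (p.extend u hu).appendStream t = p.appendStream (u ++ₛ t) := by
  simp [appendStream]

@[simp] theorem appendStream_inj {p : GPath G} {t t' : Stream' G.Ed} :
    p.appendStream t = p.appendStream t' ↔ t = t' := by
  simp [appendStream]

theorem isPrefixOf_or_isPrefixOf_of_appendStream_eq {p q : GPath G} {t t' : Stream' G.Ed}
    (h : p.appendStream t = q.appendStream t') : p.IsPrefixOf q ∨ q.IsPrefixOf p := by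
  obtain ⟨hs, he⟩ := Prod.ext_iff.1 h
  exact (List.prefix_or_prefix_of_appendStream_eq he).imp (⟨hs, ·⟩) (⟨hs.symm, ·⟩)

end GPath

namespace GIS

variable {G : DGraph}

open scoped Classical in
/-- `x y⁻¹` sends the word `y t` to `x t`. -/
noncomputable def act : GIS G → G.V × Stream' G.Ed → Option (G.V × Stream' G.Ed)
  | GIS.zero, _ => none
  | GIS.mk x y _, w =>
    if w.1 = y.start ∧ w.2.take y.edges.length = y.edges then
      some (x.appendStream (w.2.drop y.edges.length))
    else none

@[simp] theorem act_zero : act (0 : GIS G) = fun _ => none := rfl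

theorem act_mk_eq_some {x y : GPath G} {h} {w w' : G.V × Stream' G.Ed} :
    act (mk x y h) w = some w' ↔ ∃ t, w = y.appendStream t ∧ w' = x.appendStream t := by
  obtain ⟨u, s⟩ := w
  simp only [act, GPath.appendStream, Prod.mk.injEq]
  split_ifs with hw
  · obtain ⟨rfl, hs⟩ := hw
    constructor
    · rintro ⟨⟩
      refine ⟨s.drop y.edges.length, ⟨rfl, ?_⟩, rfl⟩
      nth_rewrite 1 [← Stream'.append_take_drop y.edges.length s]
      rw [hs]
    · rintro ⟨t, ⟨-, rfl⟩, rfl⟩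
      rw [Stream'.drop_append_stream]
  · refine iff_of_false nofun ?_
    rintro ⟨t, ⟨rfl, rfl⟩, -⟩
    exact hw ⟨rfl, by rw [Stream'.take_append_of_le_length _ _ _ le_rfl, List.take_length]⟩

theorem act_mk_self_eq_some {x : GPath G} {w w' : G.V × Stream' G.Ed} :
    act (mk x x rfl) w = some w' ↔ (∃ t, w = x.appendStream t) ∧ w' = w := by
  rw [act_mk_eq_some]
  constructor
  · rintro ⟨t, rfl, rfl⟩
    exact ⟨⟨t, rfl⟩, rfl⟩
  · rintro ⟨⟨t, rfl⟩, rfl⟩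
    exact ⟨t, rfl, rfl⟩

theorem act_mul (a b : GIS G) (w : G.V × Stream' G.Ed) :
    act (a * b) w = (act b w).bind (act a) := by
  cases a with
  | zero => exact (Option.bind_fun_none _).symm
  | mk x y h =>
  cases b with
  | zero => rfl
  | mk p q h' =>
  refine Option.ext fun w' => ?_
  simp only [Option.bind_eq_some_iff, act_mk_eq_some]
  by_cases hyp : y.IsPrefixOf p
  · obtain ⟨u, hu, rfl⟩ := GPath.exists_eq_extend hyp
    simp only [mk_mul_mk_extend, act_mk_eq_some, GPath.appendStream_extend]
    constructor
    · rintro ⟨t, rfl, rfl⟩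
      exact ⟨_, ⟨t, rfl, rfl⟩, _, rfl, rfl⟩
    · rintro ⟨_, ⟨t, rfl, rfl⟩, t', ht, rfl⟩
      exact ⟨t, rfl, by rw [← GPath.appendStream_inj.1 ht]⟩
  by_cases hpy : p.IsPrefixOf y
  · obtain ⟨u, hu, rfl⟩ := GPath.exists_eq_extend hpy
    simp only [mk_extend_mul_mk, act_mk_eq_some, GPath.appendStream_extend]
    constructor
    · rintro ⟨t, rfl, rfl⟩
      exact ⟨_, ⟨_, rfl, rfl⟩, t, rfl, rfl⟩
    · rintro ⟨_, ⟨t, rfl, rfl⟩, t', ht, rfl⟩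
      exact ⟨t', by rw [GPath.appendStream_inj.1 ht], rfl⟩
  · rw [mk_mul_mk_of_incomparable _ _ _ _ _ _ ⟨hyp, hpy⟩]
    refine iff_of_false nofun ?_
    rintro ⟨_, ⟨t, -, rfl⟩, t', hpt, -⟩
    exact (GPath.isPrefixOf_or_isPrefixOf_of_appendStream_eq hpt).elim hpy hyp

def actCon (S : Set (G.V × Stream' G.Ed))
    (hS : ∀ a w w', w ∈ S → act a w = some w' → w' ∈ S) : Con (GIS G) where
  r a b := ∀ w ∈ S, act a w = act b w
  iseqv := ⟨fun _ _ _ => rfl, fun h w hw => (h w hw).symm,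
    fun h₁ h₂ w hw => (h₁ w hw).trans (h₂ w hw)⟩
  mul' := by
    intro a b c d hab hcd w hw
    rw [act_mul, act_mul, hcd w hw]
    rcases hd : act d w with _ | w'
    · rfl
    · exact hab w' (hS d w w' hw hd)

/-- These are raw words: `p e e e …` is not a path unless `e` is a loop. -/
def tailWords (e : G.Ed) : Set (G.V × Stream' G.Ed) :=
  {w | ∃ p : GPath G, p.ran = G.rng e ∧ w = p.appendStream (Stream'.const e)}

theorem act_mem_tailWords (e : G.Ed) {a : GIS G} {w w' : G.V × Stream' G.Ed}
    (hw : w ∈ tailWords e) (ha : act a w = some w') : w' ∈ tailWords e := by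
  cases a with
  | zero => cases ha
  | mk x y h =>
  obtain ⟨p, hp, rfl⟩ := hw
  obtain ⟨t, hyt, rfl⟩ := act_mk_eq_some.1 ha
  rcases GPath.isPrefixOf_or_isPrefixOf_of_appendStream_eq hyt with hpy | hyp
  · obtain ⟨u, hu, rfl⟩ := GPath.exists_eq_extend hpy
    rw [GPath.appendStream_extend, eq_comm, GPath.appendStream_inj] at hyt
    obtain ⟨hue, rfl⟩ := Stream'.eq_const_of_append_eq_const hyt
    refine ⟨x, ?_, rfl⟩
    rw [h, GPath.ran_extend, hp, G.ranAux_rng_of_forall_eq e hue]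
  · obtain ⟨u, hu, rfl⟩ := GPath.exists_eq_extend hyp
    rw [GPath.appendStream_extend, GPath.appendStream_inj] at hyt
    subst hyt
    refine ⟨x.extend u (h ▸ hu), ?_, (x.appendStream_extend _ _ _).symm⟩
    rw [x.ran_extend, h, ← y.ran_extend u hu, hp]

noncomputable def tailCon (e : G.Ed) : Con (GIS G) :=
  actCon (tailWords e) fun _ _ _ => act_mem_tailWords e

theorem tailCon_vertexEl_edge (e : G.Ed) (he : ∀ p : GPath G, ¬ p.IsBypass e) :
    tailCon e (vertexEl G (G.src e)) (mk (.ofEdge G e) (.ofEdge G e) rfl) := by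
  rintro _ ⟨p, hp, rfl⟩
  refine Option.ext fun w' => ?_
  simp only [vertexEl, act_mk_self_eq_some, and_congr_left_iff]
  rintro -
  constructor
  · rintro ⟨t, ht⟩
    obtain ⟨hs, -⟩ := Prod.ext_iff.1 ht
    rcases eq_or_ne p.edges [] with hp0 | hp0
    · refine ⟨Stream'.const e, ?_⟩
      simp only [GPath.appendStream, hp0]
      exact Prod.ext hs (Stream'.const_eq e)
    · obtain ⟨q, hq, rfl⟩ : ∃ q hq, p = (GPath.ofEdge G e).append q hq := by
        by_contra! hnot
        exact he p ⟨hp0, hs, hp, hnot⟩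
      exact ⟨q.edges ++ₛ Stream'.const e, rfl⟩
  · rintro ⟨t, ht⟩
    exact ⟨Stream'.cons e t, ht⟩

theorem not_isReesCon_tailCon (e : G.Ed) (he : ∀ p : GPath G, ¬ p.IsBypass e) :
    ¬ IsReesCon (tailCon e) := by
  rw [isReesCon_iff]
  intro hRees
  have hne : vertexEl G (G.src e) ≠ mk (.ofEdge G e) (.ofEdge G e) rfl := by
    simp [vertexEl, GPath.ofVertex, GPath.ofEdge, GPath.ext_iff]
  have hzero := hRees _ _ (tailCon_vertexEl_edge e he) hne
    ((GPath.ofEdge G e).appendStream (Stream'.const e)) ⟨_, rfl, rfl⟩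
  have hact : act (vertexEl G (G.src e)) ((GPath.ofEdge G e).appendStream (Stream'.const e)) ≠
      none := by
    rw [Option.ne_none_iff_exists']
    exact ⟨_, act_mk_self_eq_some.2 ⟨⟨_, rfl⟩, rfl⟩⟩
  exact hact hzero

end GIS

/-- Every congruence on `G(E)` is a Rees congruence iff for every edge
`e ∈ E¹` there is a path `p` of positive length with `s(p) = s(e)` and `r(p) = r(e)` such
that `p ≠ e t` for all paths `t`. -/
theorem stmt14 (G : DGraph) :
    (∀ R : Con (GIS G), IsReesCon R) ↔
      ∀ e : G.Ed, ∃ p : GPath G, p.edges ≠ [] ∧ p.start = G.src e ∧ p.ran = G.rng e ∧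
        ∀ (t : GPath G) (ht : (GPath.ofEdge G e).ran = t.start),
          p ≠ (GPath.ofEdge G e).append t ht := by
  refine ⟨fun hRees => ?_, fun hC R => (isReesCon_iff R).2 fun _ _ => GIS.rel_zero_of_rel_of_ne R hC⟩
  by_contra hC
  obtain ⟨e, he⟩ := not_forall.1 hC
  exact GIS.not_isReesCon_tailCon e (fun p hp => he ⟨p, hp⟩) (hRees _)
end

section
/- Every semigroup isomorphism φ : G(E_a) → G(E_b) maps E_a⁰ bijectively onto E_b⁰ and E_a¹ bijectively onto E_b¹, and these restrictions constitute a graph isomorphism from E_a to E_b. Consequently, G(E_a) ≅ G(E_b) as semigroups if and only if E_a ≅ E_b as graphs. -/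
universe u

/-!
A semigroup isomorphism preserves zero, idempotents and the natural partial order, hence the
vertex idempotents `v v⁻¹` (the maximal nonzero idempotents) and the edge idempotents `e e⁻¹`
(the non-maximal ones lying directly below a maximal one). An edge `e` is recovered from
`ē e = r(e)` and `e ē = e e⁻¹`, which force its image to be an edge, and compatibility with
source and range comes from `s(e) e = e = e r(e)`. Conversely a graph isomorphism acts on paths,
and so on the normal forms `x y⁻¹`, multiplicatively.
-/

attribute [ext] GPath

namespace GPath

variable {G : DGraph}

@[simp] theorem ofVertex_start (v : G.V) : (ofVertex G v).start = v := rfl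
@[simp] theorem ofVertex_edges (v : G.V) : (ofVertex G v).edges = [] := rfl
@[simp] theorem ofEdge_start (e : G.Ed) : (ofEdge G e).start = G.src e := rfl
@[simp] theorem ofEdge_edges (e : G.Ed) : (ofEdge G e).edges = [e] := rfl
@[simp] theorem append_start (p q : GPath G) (h : p.ran = q.start) :
    (p.append q h).start = p.start := rfl
@[simp] theorem append_edges (p q : GPath G) (h : p.ran = q.start) :
    (p.append q h).edges = p.edges ++ q.edges := rfl
@[simp] theorem remainder_start (y p : GPath G) (h : y.IsPrefixOf p) :
    (y.remainder p h).start = y.ran := rfl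
@[simp] theorem remainder_edges (y p : GPath G) (h : y.IsPrefixOf p) :
    (y.remainder p h).edges = p.edges.drop y.edges.length := rfl

theorem eq_ofVertex_of_edges_eq_nil {p : GPath G} (h : p.edges = []) :
    p = ofVertex G p.start :=
  GPath.ext rfl h

theorem isPrefixOf_refl (p : GPath G) : p.IsPrefixOf p := ⟨rfl, List.prefix_refl _⟩

theorem IsPrefixOf.antisymm {p q : GPath G} (h₁ : p.IsPrefixOf q) (h₂ : q.IsPrefixOf p) :
    p = q :=
  GPath.ext h₁.1 (h₁.2.eq_of_length_le h₂.2.length_le)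

theorem ofVertex_start_isPrefixOf (p : GPath G) : (ofVertex G p.start).IsPrefixOf p :=
  ⟨rfl, List.nil_prefix⟩

theorem append_eq_self_iff {p q : GPath G} (h : p.ran = q.start) :
    p.append q h = p ↔ q.edges = [] := by
  simp [GPath.ext_iff]

theorem append_eq_ofVertex_iff {p q : GPath G} {h : p.ran = q.start} {v : G.V} :
    p.append q h = ofVertex G v ↔ p = ofVertex G v ∧ q.edges = [] := by
  simp only [GPath.ext_iff, append_start, append_edges, ofVertex_start, ofVertex_edges,
    List.append_eq_nil_iff, and_assoc]

theorem remainder_edges_eq_nil_iff {y p : GPath G} (h : y.IsPrefixOf p) :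
    (y.remainder p h).edges = [] ↔ y = p := by
  refine ⟨fun hnil => GPath.ext h.1 (h.2.eq_of_length_le ?_), fun hyp => by subst hyp; simp⟩
  rwa [remainder_edges, List.drop_eq_nil_iff] at hnil

theorem append_remainder {y p : GPath G} (h : y.IsPrefixOf p) :
    y.append (y.remainder p h) (remainder_start y p h).symm = p := by
  obtain ⟨t, ht⟩ := h.2
  refine GPath.ext h.1 ?_
  rw [append_edges, remainder_edges, ← ht, List.drop_left]

theorem eq_ofEdge_or_edges_eq_nil_of_isPrefixOf {p : GPath G} {e : G.Ed}
    (h : p.IsPrefixOf (ofEdge G e)) : p = ofEdge G e ∨ p.edges = [] := by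
  rcases List.prefix_cons_iff.mp h.2 with hnil | ⟨t, ht, htnil⟩
  · exact Or.inr hnil
  · exact Or.inl (GPath.ext h.1 (by simpa [List.prefix_nil.mp htnil] using ht))

theorem exists_ofEdge_isPrefixOf {p : GPath G} (h : p.edges ≠ []) :
    ∃ e, (ofEdge G e).IsPrefixOf p := by
  obtain ⟨s, _ | ⟨e, t⟩, hc⟩ := p
  · exact absurd rfl h
  · exact ⟨e, hc.1, List.cons_prefix_cons.mpr ⟨rfl, List.nil_prefix⟩⟩

end GPath

namespace GIS

variable {G : DGraph}

theorem mk_ne_zero {x y : GPath G} {h : x.ran = y.ran} : mk x y h ≠ 0 := nofun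

noncomputable instance : MulZeroClass (GIS G) where
  zero_mul _ := rfl
  mul_zero a := by cases a <;> rfl

theorem mk_mul_mk_of_isPrefixOf {x y p q : GPath G} {hxy : x.ran = y.ran}
    {hpq : p.ran = q.ran} (h : y.IsPrefixOf p) :
    mk x y hxy * mk p q hpq =
      mk (x.append (y.remainder p h) (hxy.trans (GPath.remainder_start y p h).symm)) q
        ((GPath.append_ran _ _ _).trans ((GPath.remainder_ran _ _ _).trans hpq)) := by
  change gmul _ _ = _
  rw [gmul, dif_pos h]

theorem mk_mul_mk_of_isPrefixOf' {x y p q : GPath G} {hxy : x.ran = y.ran}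
    {hpq : p.ran = q.ran} (h₁ : ¬ y.IsPrefixOf p) (h₂ : p.IsPrefixOf y) :
    mk x y hxy * mk p q hpq =
      mk x (q.append (p.remainder y h₂) (hpq.symm.trans (GPath.remainder_start p y h₂).symm))
        (hxy.trans ((GPath.append_ran _ _ _).trans (GPath.remainder_ran _ _ _)).symm) := by
  change gmul _ _ = _
  rw [gmul, dif_neg h₁, dif_pos h₂]

theorem mk_mul_mk_of_not_isPrefixOf {x y p q : GPath G} {hxy : x.ran = y.ran}
    {hpq : p.ran = q.ran} (h₁ : ¬ y.IsPrefixOf p) (h₂ : ¬ p.IsPrefixOf y) :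
    mk x y hxy * mk p q hpq = 0 := by
  change gmul _ _ = _
  rw [gmul, dif_neg h₁, dif_neg h₂]
  rfl

theorem mk_mul_mk_cancel_s19 {x y z : GPath G} (hxy : x.ran = y.ran) (hyz : y.ran = z.ran) :
    mk x y hxy * mk y z hyz = mk x z (hxy.trans hyz) := by
  rw [mk_mul_mk_of_isPrefixOf (GPath.isPrefixOf_refl y), mk.injEq]
  exact ⟨(GPath.append_eq_self_iff _).mpr ((GPath.remainder_edges_eq_nil_iff _).mpr rfl), rfl⟩

theorem vertexEl_mul_mk_eq_self_iff {v : G.V} {x y : GPath G} {h : x.ran = y.ran} :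
    vertexEl G v * mk x y h = mk x y h ↔ x.start = v := by
  by_cases hx : x.start = v
  · subst hx
    simp only [vertexEl, mk_mul_mk_of_isPrefixOf (GPath.ofVertex_start_isPrefixOf x), mk.injEq,
      and_true, iff_true]
    exact GPath.append_remainder _
  · refine iff_of_false (fun he => ?_) hx
    rw [vertexEl, mk_mul_mk_of_not_isPrefixOf] at he
    · exact mk_ne_zero he.symm
    · exact fun hp => hx hp.1.symm
    · exact fun hp => hx hp.1

theorem mk_mul_vertexEl_eq_self_iff {v : G.V} {x y : GPath G} {h : x.ran = y.ran} :
    mk x y h * vertexEl G v = mk x y h ↔ y.start = v := by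
  by_cases hy : y.start = v
  · subst hy
    simp only [vertexEl, iff_true]
    by_cases h₁ : y.IsPrefixOf (GPath.ofVertex G y.start)
    · rw [mk_mul_mk_of_isPrefixOf h₁, mk.injEq]
      exact ⟨(GPath.append_eq_self_iff _).mpr (by simp),
        (GPath.ofVertex_start_isPrefixOf y).antisymm h₁⟩
    · rw [mk_mul_mk_of_isPrefixOf' h₁ (GPath.ofVertex_start_isPrefixOf y), mk.injEq]
      exact ⟨rfl, GPath.append_remainder _⟩
  · refine iff_of_false (fun he => ?_) hy
    rw [vertexEl, mk_mul_mk_of_not_isPrefixOf] at he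
    · exact mk_ne_zero he.symm
    · exact fun hp => hy hp.1
    · exact fun hp => hy hp.1.symm

end GIS

section Idempotents

variable {G : DGraph}

def IsNonzeroIdem (a : GIS G) : Prop := a * a = a ∧ a ≠ 0

theorem isNonzeroIdem_iff {a : GIS G} : IsNonzeroIdem a ↔ ∃ x, a = GIS.mk x x rfl := by
  refine ⟨fun ⟨hidem, hne⟩ => ?_,
    fun ⟨x, hx⟩ => hx ▸ ⟨GIS.mk_mul_mk_cancel_s19 rfl rfl, GIS.mk_ne_zero⟩⟩
  cases a with
  | zero => exact absurd rfl hne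
  | mk x y h =>
    by_cases h₁ : y.IsPrefixOf x
    · rw [GIS.mk_mul_mk_of_isPrefixOf h₁, GIS.mk.injEq] at hidem
      obtain rfl := (GPath.remainder_edges_eq_nil_iff h₁).mp
        ((GPath.append_eq_self_iff _).mp hidem.1)
      exact ⟨y, rfl⟩
    by_cases h₂ : x.IsPrefixOf y
    · rw [GIS.mk_mul_mk_of_isPrefixOf' h₁ h₂, GIS.mk.injEq] at hidem
      obtain rfl := (GPath.remainder_edges_eq_nil_iff h₂).mp
        ((GPath.append_eq_self_iff _).mp hidem.2)
      exact ⟨x, rfl⟩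
    · rw [GIS.mk_mul_mk_of_not_isPrefixOf h₁ h₂] at hidem
      exact absurd hidem.symm GIS.mk_ne_zero

theorem forall_isNonzeroIdem_imp {P : GIS G → Prop} :
    (∀ b, IsNonzeroIdem b → P b) ↔ ∀ x : GPath G, P (GIS.mk x x rfl) := by
  simp only [isNonzeroIdem_iff]
  exact ⟨fun h x => h _ ⟨x, rfl⟩, fun h _ ⟨x, hx⟩ => hx ▸ h x⟩

theorem natLe_mk_mk_iff {x p : GPath G} :
    natLe (GIS.mk x x rfl) (GIS.mk p p rfl) ↔ p.IsPrefixOf x := by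
  constructor
  · rintro ⟨ε, hε, heq⟩
    obtain ⟨u, rfl⟩ := isNonzeroIdem_iff.mp ⟨hε, by rintro rfl; exact GIS.mk_ne_zero heq⟩
    by_cases h₁ : u.IsPrefixOf p
    · rw [GIS.mk_mul_mk_of_isPrefixOf h₁, GIS.mk.injEq] at heq
      exact heq.2 ▸ GPath.isPrefixOf_refl p
    by_cases h₂ : p.IsPrefixOf u
    · rw [GIS.mk_mul_mk_of_isPrefixOf' h₁ h₂, GIS.mk.injEq] at heq
      exact heq.1 ▸ h₂
    · rw [GIS.mk_mul_mk_of_not_isPrefixOf h₁ h₂] at heq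
      exact absurd heq GIS.mk_ne_zero
  · intro hp
    refine ⟨GIS.mk x x rfl, GIS.mk_mul_mk_cancel_s19 rfl rfl, ?_⟩
    by_cases h₁ : x.IsPrefixOf p
    · rw [h₁.antisymm hp]
      exact (GIS.mk_mul_mk_cancel_s19 rfl rfl).symm
    · rw [GIS.mk_mul_mk_of_isPrefixOf' h₁ hp, GIS.mk.injEq]
      exact ⟨rfl, (GPath.append_remainder hp).symm⟩

def IsVertexIdem (a : GIS G) : Prop :=
  IsNonzeroIdem a ∧ ∀ b, IsNonzeroIdem b → natLe a b → b = a

def IsEdgeIdem (a : GIS G) : Prop :=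
  IsNonzeroIdem a ∧ ¬ IsVertexIdem a ∧
    ∀ b, IsNonzeroIdem b → natLe a b → b = a ∨ IsVertexIdem b

theorem isVertexIdem_mk_iff {x : GPath G} : IsVertexIdem (GIS.mk x x rfl) ↔ x.edges = [] := by
  simp only [IsVertexIdem, forall_isNonzeroIdem_imp, natLe_mk_mk_iff, GIS.mk.injEq, and_self]
  refine ⟨fun ⟨_, hmax⟩ => ?_,
    fun hnil => ⟨isNonzeroIdem_iff.mpr ⟨x, rfl⟩, fun p hp => ?_⟩⟩
  · rw [← hmax _ (GPath.ofVertex_start_isPrefixOf x)]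
    rfl
  · exact GPath.ext hp.1 (hnil ▸ List.prefix_nil.mp (hnil ▸ hp.2))

theorem isVertexIdem_iff {a : GIS G} : IsVertexIdem a ↔ a ∈ Set.range (vertexEl G) := by
  constructor
  · intro ha
    obtain ⟨x, rfl⟩ := isNonzeroIdem_iff.mp ha.1
    have hx := GPath.eq_ofVertex_of_edges_eq_nil (isVertexIdem_mk_iff.mp ha)
    exact ⟨x.start, GIS.mk.injEq .. ▸ ⟨hx.symm, hx.symm⟩⟩
  · rintro ⟨v, rfl⟩
    exact isVertexIdem_mk_iff.mpr rfl

theorem isEdgeIdem_iff {a : GIS G} :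
    IsEdgeIdem a ↔ ∃ e, a = GIS.mk (GPath.ofEdge G e) (GPath.ofEdge G e) rfl := by
  constructor
  · rintro ⟨hidem, hnv, hcover⟩
    obtain ⟨x, rfl⟩ := isNonzeroIdem_iff.mp hidem
    rw [isVertexIdem_mk_iff] at hnv
    obtain ⟨e, he⟩ := GPath.exists_ofEdge_isPrefixOf hnv
    rcases forall_isNonzeroIdem_imp.mp hcover _ (natLe_mk_mk_iff.mpr he) with heq | hv
    · exact ⟨e, heq.symm⟩
    · exact absurd (isVertexIdem_mk_iff.mp hv) (List.cons_ne_nil e [])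
  · rintro ⟨e, rfl⟩
    refine ⟨isNonzeroIdem_iff.mpr ⟨_, rfl⟩,
      fun hv => List.cons_ne_nil e [] (isVertexIdem_mk_iff.mp hv),
      forall_isNonzeroIdem_imp.mpr fun p hp => ?_⟩
    rcases GPath.eq_ofEdge_or_edges_eq_nil_of_isPrefixOf (natLe_mk_mk_iff.mp hp) with rfl | hnil
    · exact Or.inl rfl
    · exact Or.inr (isVertexIdem_mk_iff.mpr hnil)

end Idempotents

namespace GIS

variable {G : DGraph}

theorem vertexEl_injective : Function.Injective (vertexEl G) :=
  fun _ _ h => congrArg GPath.start ((mk.injEq ..).mp h).1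

theorem edgeEl_injective : Function.Injective (edgeEl G) :=
  fun _ _ h => List.singleton_injective (congrArg GPath.edges ((mk.injEq ..).mp h).1)

theorem exists_eq_mk_of_mul_eq_vertexEl {a b : GIS G} {w : G.V} (h : b * a = vertexEl G w) :
    ∃ p : GPath G, p.ran = w ∧
      a = mk p (GPath.ofVertex G p.ran) (GPath.ofVertex_ran G _).symm ∧
      b = mk (GPath.ofVertex G p.ran) p (GPath.ofVertex_ran G _) := by
  obtain _ | ⟨x, y, hxy⟩ := b
  · exact absurd h.symm mk_ne_zero
  obtain _ | ⟨p, q, hpq⟩ := a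
  · exact absurd h.symm mk_ne_zero
  by_cases h₁ : y.IsPrefixOf p
  · rw [mk_mul_mk_of_isPrefixOf h₁, vertexEl, mk.injEq, GPath.append_eq_ofVertex_iff,
      GPath.remainder_edges_eq_nil_iff] at h
    obtain ⟨⟨rfl, rfl⟩, rfl⟩ := h
    obtain rfl : y.ran = w := hxy.symm
    exact ⟨y, rfl, rfl, rfl⟩
  by_cases h₂ : p.IsPrefixOf y
  · rw [mk_mul_mk_of_isPrefixOf' h₁ h₂, vertexEl, mk.injEq, GPath.append_eq_ofVertex_iff,
      GPath.remainder_edges_eq_nil_iff] at h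
    obtain ⟨rfl, rfl, rfl⟩ := h
    obtain rfl : p.ran = w := hpq
    exact ⟨p, rfl, rfl, rfl⟩
  · rw [mk_mul_mk_of_not_isPrefixOf h₁ h₂] at h
    exact absurd h.symm mk_ne_zero

end GIS

theorem Equiv.exists_bijective_of_mem_range_iff {α β A B : Type*} {ι : α → A} {κ : β → B}
    (hι : Function.Injective ι) (hκ : Function.Injective κ) (φ : A ≃ B)
    (h : ∀ a, φ a ∈ Set.range κ ↔ a ∈ Set.range ι) :
    ∃ f : α → β, Function.Bijective f ∧ ∀ x, φ (ι x) = κ (f x) := by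
  let φ' : Set.range ι ≃ Set.range κ := φ.subtypeEquiv fun a => (h a).symm
  refine ⟨(Equiv.ofInjective ι hι).trans (φ'.trans (Equiv.ofInjective κ hκ).symm),
    Equiv.bijective _, fun x => ?_⟩
  simp [φ', Equiv.apply_ofInjective_symm]

section MulEquiv

variable {Ga Gb : DGraph} (phi : GIS Ga ≃* GIS Gb)

theorem isNonzeroIdem_map_iff {a : GIS Ga} : IsNonzeroIdem (phi a) ↔ IsNonzeroIdem a := by
  simp only [IsNonzeroIdem, ← map_mul, EquivLike.apply_eq_iff_eq, ne_eq,
    EmbeddingLike.map_eq_zero_iff]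

theorem natLe_map_iff {a b : GIS Ga} : natLe (phi a) (phi b) ↔ natLe a b := by
  simp only [natLe, phi.surjective.exists, ← map_mul, EquivLike.apply_eq_iff_eq]

theorem isVertexIdem_map_iff {a : GIS Ga} : IsVertexIdem (phi a) ↔ IsVertexIdem a := by
  simp only [IsVertexIdem, phi.surjective.forall, isNonzeroIdem_map_iff, natLe_map_iff,
    EquivLike.apply_eq_iff_eq]

theorem isEdgeIdem_map_iff {a : GIS Ga} : IsEdgeIdem (phi a) ↔ IsEdgeIdem a := by
  simp only [IsEdgeIdem, phi.surjective.forall, isNonzeroIdem_map_iff, natLe_map_iff,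
    isVertexIdem_map_iff, EquivLike.apply_eq_iff_eq]

theorem map_mem_range_vertexEl_iff {a : GIS Ga} :
    phi a ∈ Set.range (vertexEl Gb) ↔ a ∈ Set.range (vertexEl Ga) := by
  rw [← isVertexIdem_iff, ← isVertexIdem_iff, isVertexIdem_map_iff]

/-- With `ē` the inverse of `e`, `ē e = r(e)` is a vertex and `e ē` an edge idempotent; both
facts survive `phi`, and they force `phi e` to be an edge. -/
theorem map_edgeEl_mem_range (e : Ga.Ed) : phi (edgeEl Ga e) ∈ Set.range (edgeEl Gb) := by
  set ebar : GIS Ga := GIS.mk (GPath.ofVertex Ga (Ga.rng e)) (GPath.ofEdge Ga e) rfl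
  obtain ⟨w, hw⟩ := (map_mem_range_vertexEl_iff phi).mpr ⟨Ga.rng e, rfl⟩
  obtain ⟨p, -, hp, hpbar⟩ := GIS.exists_eq_mk_of_mul_eq_vertexEl
    (a := phi (edgeEl Ga e)) (b := phi ebar) (w := w)
    (by rw [← map_mul, hw]; exact congrArg phi (GIS.mk_mul_mk_cancel_s19 _ _))
  obtain ⟨f, hf⟩ :=
    isEdgeIdem_iff.mp ((isEdgeIdem_map_iff phi).mpr (isEdgeIdem_iff.mpr ⟨e, rfl⟩))
  have hpf : GIS.mk p p rfl = GIS.mk (GPath.ofEdge Gb f) (GPath.ofEdge Gb f) rfl :=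
    calc GIS.mk p p rfl = phi (edgeEl Ga e) * phi ebar := by
          rw [hp, hpbar, GIS.mk_mul_mk_cancel_s19]
      _ = phi (GIS.mk (GPath.ofEdge Ga e) (GPath.ofEdge Ga e) rfl) := by
          rw [← map_mul]; exact congrArg phi (GIS.mk_mul_mk_cancel_s19 _ _)
      _ = _ := hf
  obtain rfl := ((GIS.mk.injEq ..).mp hpf).1
  exact ⟨f, hp.symm⟩

theorem map_mem_range_edgeEl_iff {a : GIS Ga} :
    phi a ∈ Set.range (edgeEl Gb) ↔ a ∈ Set.range (edgeEl Ga) := by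
  refine ⟨fun ⟨f, hf⟩ => ?_, fun ⟨e, he⟩ => he ▸ map_edgeEl_mem_range phi e⟩
  simpa [hf] using map_edgeEl_mem_range phi.symm f

theorem map_src_and_rng_of_map_edgeEl {phi0 : Ga.V → Gb.V} {e : Ga.Ed} {f : Gb.Ed}
    (hv : ∀ v, phi (vertexEl Ga v) = vertexEl Gb (phi0 v))
    (he : phi (edgeEl Ga e) = edgeEl Gb f) :
    phi0 (Ga.src e) = Gb.src f ∧ phi0 (Ga.rng e) = Gb.rng f := by
  have hsrc := congrArg phi (show vertexEl Ga (Ga.src e) * edgeEl Ga e = edgeEl Ga e from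
    GIS.vertexEl_mul_mk_eq_self_iff.mpr rfl)
  have hrng := congrArg phi (show edgeEl Ga e * vertexEl Ga (Ga.rng e) = edgeEl Ga e from
    GIS.mk_mul_vertexEl_eq_self_iff.mpr rfl)
  rw [map_mul, hv, he] at hsrc hrng
  exact ⟨(GIS.vertexEl_mul_mk_eq_self_iff.mp hsrc).symm,
    (GIS.mk_mul_vertexEl_eq_self_iff.mp hrng).symm⟩

theorem exists_graph_iso_of_mulEquiv :
    ∃ (phi0 : Ga.V → Gb.V) (phi1 : Ga.Ed → Gb.Ed),
      Function.Bijective phi0 ∧ Function.Bijective phi1 ∧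
      (∀ e, phi0 (Ga.src e) = Gb.src (phi1 e)) ∧ (∀ e, phi0 (Ga.rng e) = Gb.rng (phi1 e)) ∧
      (∀ v, phi (vertexEl Ga v) = vertexEl Gb (phi0 v)) ∧
      (∀ e, phi (edgeEl Ga e) = edgeEl Gb (phi1 e)) := by
  obtain ⟨phi0, hbij0, hv⟩ := Equiv.exists_bijective_of_mem_range_iff
    GIS.vertexEl_injective GIS.vertexEl_injective phi.toEquiv
    fun _ => map_mem_range_vertexEl_iff phi
  obtain ⟨phi1, hbij1, he⟩ := Equiv.exists_bijective_of_mem_range_iff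
    GIS.edgeEl_injective GIS.edgeEl_injective phi.toEquiv
    fun _ => map_mem_range_edgeEl_iff phi
  have hcompat e := map_src_and_rng_of_map_edgeEl phi hv (he e)
  exact ⟨phi0, phi1, hbij0, hbij1, fun e => (hcompat e).1, fun e => (hcompat e).2, hv, he⟩

end MulEquiv

structure DGraph.Iso (Ga Gb : DGraph) where
  onV : Ga.V ≃ Gb.V
  onEd : Ga.Ed ≃ Gb.Ed
  map_src : ∀ e, onV (Ga.src e) = Gb.src (onEd e)
  map_rng : ∀ e, onV (Ga.rng e) = Gb.rng (onEd e)

namespace DGraph.Iso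

variable {Ga Gb : DGraph}

def symm (φ : Ga.Iso Gb) : Gb.Iso Ga where
  onV := φ.onV.symm
  onEd := φ.onEd.symm
  map_src f := by rw [Equiv.symm_apply_eq, φ.map_src, Equiv.apply_symm_apply]
  map_rng f := by rw [Equiv.symm_apply_eq, φ.map_rng, Equiv.apply_symm_apply]

@[simp] theorem symm_onV (φ : Ga.Iso Gb) : φ.symm.onV = φ.onV.symm := rfl
@[simp] theorem symm_onEd (φ : Ga.Iso Gb) : φ.symm.onEd = φ.onEd.symm := rfl

theorem chain_map (φ : Ga.Iso Gb) {v : Ga.V} {l : List Ga.Ed} (h : Ga.Chain v l) :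
    Gb.Chain (φ.onV v) (l.map φ.onEd) := by
  induction l generalizing v with
  | nil => trivial
  | cons e es ih => exact ⟨by rw [← φ.map_src, h.1], φ.map_rng e ▸ ih h.2⟩

theorem ranAux_map (φ : Ga.Iso Gb) (v : Ga.V) (l : List Ga.Ed) :
    Gb.ranAux (φ.onV v) (l.map φ.onEd) = φ.onV (Ga.ranAux v l) := by
  induction l generalizing v with
  | nil => rfl
  | cons e es ih => exact (congrArg (Gb.ranAux · _) (φ.map_rng e).symm).trans (ih _)

end DGraph.Iso

namespace GPath

variable {Ga Gb : DGraph} (φ : Ga.Iso Gb)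

def map (p : GPath Ga) : GPath Gb := ⟨φ.onV p.start, p.edges.map φ.onEd, φ.chain_map p.chain⟩

@[simp] theorem map_start (p : GPath Ga) : (p.map φ).start = φ.onV p.start := rfl
@[simp] theorem map_edges (p : GPath Ga) : (p.map φ).edges = p.edges.map φ.onEd := rfl
@[simp] theorem map_ran (p : GPath Ga) : (p.map φ).ran = φ.onV p.ran := φ.ranAux_map _ _

@[simp] theorem symm_map_map (p : GPath Ga) : (p.map φ).map φ.symm = p :=
  GPath.ext (by simp) (by simp)

theorem map_isPrefixOf_map_iff {y p : GPath Ga} :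
    (y.map φ).IsPrefixOf (p.map φ) ↔ y.IsPrefixOf p := by
  simp only [IsPrefixOf, map_start, map_edges, φ.onV.apply_eq_iff_eq,
    List.prefix_map_iff_of_injective φ.onEd.injective]

end GPath

namespace GIS

variable {Ga Gb : DGraph} (φ : Ga.Iso Gb)

def map : GIS Ga → GIS Gb
  | zero => 0
  | mk x y h => mk (x.map φ) (y.map φ) (by simp [h])

theorem symm_map_map (a : GIS Ga) : map φ.symm (map φ a) = a := by
  cases a with
  | zero => rfl
  | mk x y h => simp [map]

theorem map_mul (a b : GIS Ga) : map φ (a * b) = map φ a * map φ b := by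
  obtain _ | ⟨x, y, hxy⟩ := a
  · rfl
  obtain _ | ⟨p, q, hpq⟩ := b
  · change map φ (_ * 0) = _ * 0
    rw [mul_zero, mul_zero]
    rfl
  have hmap {y p : GPath Ga} := GPath.map_isPrefixOf_map_iff φ (y := y) (p := p)
  by_cases h₁ : y.IsPrefixOf p
  · rw [mk_mul_mk_of_isPrefixOf h₁, map, map, map, mk_mul_mk_of_isPrefixOf (hmap.mpr h₁),
      mk.injEq]
    exact ⟨GPath.ext rfl (by simp [List.map_drop]), rfl⟩
  by_cases h₂ : p.IsPrefixOf y
  · rw [mk_mul_mk_of_isPrefixOf' h₁ h₂, map, map, map,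
      mk_mul_mk_of_isPrefixOf' (mt hmap.mp h₁) (hmap.mpr h₂), mk.injEq]
    exact ⟨rfl, GPath.ext rfl (by simp [List.map_drop])⟩
  · rw [mk_mul_mk_of_not_isPrefixOf h₁ h₂, map, map,
      mk_mul_mk_of_not_isPrefixOf (mt hmap.mp h₁) (mt hmap.mp h₂)]
    rfl

noncomputable def congr : GIS Ga ≃* GIS Gb where
  toFun := map φ
  invFun := map φ.symm
  left_inv := symm_map_map φ
  right_inv := symm_map_map φ.symm
  map_mul' := map_mul φ

end GIS

/-- Every semigroup isomorphism `G(E_a) → G(E_b)` restricts to a graph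
isomorphism `E_a → E_b`; consequently `G(E_a) ≅ G(E_b)` as semigroups iff `E_a ≅ E_b` as
graphs. -/
theorem stmt19 (Ga Gb : DGraph) :
    (∀ phi : GIS Ga ≃* GIS Gb,
      ∃ (phi0 : Ga.V → Gb.V) (phi1 : Ga.Ed → Gb.Ed),
        Function.Bijective phi0 ∧ Function.Bijective phi1 ∧
        (∀ e : Ga.Ed, phi0 (Ga.src e) = Gb.src (phi1 e)) ∧
        (∀ e : Ga.Ed, phi0 (Ga.rng e) = Gb.rng (phi1 e)) ∧
        (∀ v : Ga.V, phi (vertexEl Ga v) = vertexEl Gb (phi0 v)) ∧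
        (∀ e : Ga.Ed, phi (edgeEl Ga e) = edgeEl Gb (phi1 e))) ∧
    (Nonempty (GIS Ga ≃* GIS Gb) ↔
      ∃ (phi0 : Ga.V → Gb.V) (phi1 : Ga.Ed → Gb.Ed),
        Function.Bijective phi0 ∧ Function.Bijective phi1 ∧
        (∀ e : Ga.Ed, phi0 (Ga.src e) = Gb.src (phi1 e)) ∧
        (∀ e : Ga.Ed, phi0 (Ga.rng e) = Gb.rng (phi1 e))) := by
  refine ⟨exists_graph_iso_of_mulEquiv, fun ⟨phi⟩ => ?_,
    fun ⟨phi0, phi1, h0, h1, hs, hr⟩ => ?_⟩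
  · obtain ⟨phi0, phi1, h0, h1, hs, hr, -⟩ := exists_graph_iso_of_mulEquiv phi
    exact ⟨phi0, phi1, h0, h1, hs, hr⟩
  · exact ⟨GIS.congr ⟨Equiv.ofBijective phi0 h0, Equiv.ofBijective phi1 h1, hs, hr⟩⟩
end
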